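/- arXiv:1106.3351 — 3 statements merged into one kernel-verified Lean document; each statement's English description precedes it below -/
import Mathlib

section
/- Let G and H be locally compact abelian groups and f : G → H a continuous proper surjective group homomorphism. Then the dual homomorphism f̂ : Ĥ → Ĝ, defined by f̂(χ) = χ ∘ f, is an open map onto its (closed) image. -/
open Topology

/-- If `f : G → H` is a continuous proper surjective homomorphism of locally compact abelian
groups, then the dual homomorphism `f̂ : Ĥ → Ĝ`, `f̂ χ = χ ∘ f`, is an open map onto its
closed image. -/
theorem pontryaginDual_map_open_onto_closed_range
    {G H : Type*} [CommGroup G] [CommGroup H]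
    [TopologicalSpace G] [TopologicalSpace H]
    [IsTopologicalGroup G] [IsTopologicalGroup H]
    [T2Space G] [T2Space H]
    [LocallyCompactSpace G] [LocallyCompactSpace H]
    (f : G →* H) (hcont : Continuous f)
    (hproper : ∀ C : Set H, IsCompact C → IsCompact (f ⁻¹' C))
    (hsurj : Function.Surjective f) :
    letI fhat := PontryaginDual.map (⟨f, hcont⟩ : ContinuousMonoidHom G H)
    IsClosed (Set.range fhat) ∧
      ∀ V : Set (PontryaginDual H), IsOpen V →
        ∃ W : Set (PontryaginDual G), IsOpen W ∧ fhat '' V = W ∩ Set.range fhat := by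
  set fhat := ⇑(PontryaginDual.map (⟨f, hcont⟩ : ContinuousMonoidHom G H)) with hfhat
  -- the continuous map version of `f`
  set fc : C(G, H) := ⟨f, hcont⟩ with hfc
  -- Step 1: precomposition with `f` on continuous maps is inducing
  have hP : IsInducing (fun k : C(H, Circle) => k.comp fc) := by
    refine ⟨le_antisymm (continuous_iff_le_induced.mp (ContinuousMap.continuous_precomp fc)) ?_⟩
    rw [ContinuousMap.compactOpen_eq]
    refine le_generateFrom ?_
    rintro s ⟨K, hK, U, hU, rfl⟩
    have hset : (fun K U => {k : C(H, Circle) | Set.MapsTo k K U}) K U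
        = (fun k : C(H, Circle) => k.comp fc) ⁻¹'
          {m : C(G, Circle) | Set.MapsTo m (f ⁻¹' K) U} := by
      ext k
      simp only [Set.mem_setOf_eq, Set.mem_preimage]
      constructor
      · intro h g hg
        exact h hg
      · intro h x hx
        obtain ⟨g, rfl⟩ := hsurj x
        exact h hx
    rw [hset]
    exact isOpen_induced (ContinuousMap.isOpen_setOf_mapsTo (hproper K hK) hU)
  -- Step 2: `fhat` is inducing
  have hind : IsInducing fhat := by
    have h1 : IsInducing ((fun k : C(H, Circle) => k.comp fc) ∘
        (ContinuousMonoidHom.toContinuousMap : PontryaginDual H → C(H, Circle))) :=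
      hP.comp (ContinuousMonoidHom.isInducing_toContinuousMap H Circle)
    have h2 : ((ContinuousMonoidHom.toContinuousMap : PontryaginDual G → C(G, Circle)) ∘ fhat)
        = (fun k : C(H, Circle) => k.comp fc) ∘
          (ContinuousMonoidHom.toContinuousMap : PontryaginDual H → C(H, Circle)) := rfl
    have hgf : IsInducing ((ContinuousMonoidHom.toContinuousMap :
        PontryaginDual G → C(G, Circle)) ∘ fhat) := by rw [h2]; exact h1
    have hc : Continuous fhat :=
      (ContinuousMonoidHom.isInducing_toContinuousMap G Circle).continuous_iff.mpr hgf.continuous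
    exact IsInducing.of_comp hc
      (ContinuousMonoidHom.isInducing_toContinuousMap G Circle).continuous hgf
  -- `f` is a quotient map
  have hprop : IsProperMap f := isProperMap_iff_isCompact_preimage.mpr
    ⟨hcont, fun K hK => hproper K hK⟩
  have hquot : IsQuotientMap f := hprop.isClosedMap.isQuotientMap hcont hsurj
  -- Step 3: the range of `fhat` is the set of characters trivial on the kernel of `f`
  have hrange : Set.range fhat = {χ : PontryaginDual G | ∀ g : G, f g = 1 → χ g = 1} := by
    ext χ
    constructor
    · rintro ⟨ψ, rfl⟩ g hg
      show ψ (f g) = 1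
      rw [hg, map_one]
    · intro hχ
      have key : ∀ g : G, χ (Function.surjInv hsurj (f g)) = χ g := by
        intro g
        have h1 : f (Function.surjInv hsurj (f g) * g⁻¹) = 1 := by
          rw [map_mul, Function.surjInv_eq hsurj, map_inv, mul_inv_cancel]
        have h2 := hχ _ h1
        rwa [map_mul, map_inv, mul_inv_eq_one] at h2
      set m : H → Circle := fun h => χ (Function.surjInv hsurj h) with hm
      have hcomp : m ∘ f = χ := funext key
      have hmcont : Continuous m := hquot.continuous_iff.mpr (by rw [hcomp]; exact map_continuous χ)
      have hmul : ∀ h₁ h₂ : H, m (h₁ * h₂) = m h₁ * m h₂ := by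
        intro h₁ h₂
        obtain ⟨g₁, rfl⟩ := hsurj h₁
        obtain ⟨g₂, rfl⟩ := hsurj h₂
        have : m (f g₁ * f g₂) = m (f (g₁ * g₂)) := by rw [map_mul]
        rw [this]
        show χ (Function.surjInv hsurj (f (g₁ * g₂)))
          = χ (Function.surjInv hsurj (f g₁)) * χ (Function.surjInv hsurj (f g₂))
        rw [key, key, key, map_mul]
      have hone : m 1 = 1 := by
        have : m (f 1) = χ 1 := key 1
        rwa [map_one, map_one] at this
      refine ⟨⟨⟨⟨m, hone⟩, hmul⟩, hmcont⟩, ?_⟩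
      apply ContinuousMonoidHom.ext
      intro g
      exact key g
  constructor
  · rw [hrange]
    have heq : {χ : PontryaginDual G | ∀ g : G, f g = 1 → χ g = 1}
        = ⋂ g ∈ {g : G | f g = 1}, {χ : PontryaginDual G | χ g = 1} := by
      ext χ; simp [Set.mem_iInter]
    rw [heq]
    have hev : ∀ g : G, Continuous fun χ : PontryaginDual G => χ g := by
      intro g
      have h1 : Continuous fun m : C(G, Circle) => m g := continuous_eval_const g
      exact h1.comp (ContinuousMonoidHom.isInducing_toContinuousMap G Circle).continuous
    exact isClosed_biInter fun g _ => isClosed_eq (hev g) continuous_const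
  · intro V hV
    obtain ⟨W, hW, hWV⟩ := hind.isOpen_iff.mp hV
    exact ⟨W, hW, by rw [← hWV, Set.image_preimage_eq_inter_range]⟩
end

section
/- In the special linear group SL₂(ℝ), every continuous finite-dimensional unitary representation is trivial on the whole group; consequently every continuous homomorphism from SL₂(ℝ) to a compact Hausdorff topological group is trivial, i.e., the Bohr compactification of SL₂(ℝ) is the trivial group. -/
/-- The topology on `SL(2, ℝ)` induced from the space of matrices. -/
instance : TopologicalSpace (Matrix.SpecialLinearGroup (Fin 2) ℝ) :=
  TopologicalSpace.induced
    (fun A => (A : Matrix (Fin 2) (Fin 2) ℝ)) inferInstance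

namespace SL2Triv

open Matrix Filter Topology

abbrev SL2 := Matrix.SpecialLinearGroup (Fin 2) ℝ

/-- Upper unipotent. -/
def U (t : ℝ) : SL2 := ⟨!![1, t; 0, 1], by simp [Matrix.det_fin_two_of]⟩

/-- Lower unipotent. -/
def L (t : ℝ) : SL2 := ⟨!![1, 0; t, 1], by simp [Matrix.det_fin_two_of]⟩

/-- Diagonal element. -/
noncomputable def D (c : ℝ) (hc : c ≠ 0) : SL2 :=
  ⟨!![c, 0; 0, c⁻¹], by rw [Matrix.det_fin_two_of]; simp [hc]⟩

/-- Weyl element. -/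
def W : SL2 := ⟨!![0, -1; 1, 0], by simp [Matrix.det_fin_two_of]⟩

lemma U_zero : U 0 = 1 := by
  apply Subtype.ext
  simp [U, Matrix.SpecialLinearGroup.coe_one, Matrix.one_fin_two]

lemma continuous_U : Continuous U := by
  apply continuous_induced_rng.2
  show Continuous fun t : ℝ => (!![1, t; 0, 1] : Matrix (Fin 2) (Fin 2) ℝ)
  apply continuous_matrix
  intro i j
  fin_cases i <;> fin_cases j <;> simp <;>
    first
      | exact continuous_const
      | exact continuous_id

lemma D_mul_U (c : ℝ) (hc : c ≠ 0) (t : ℝ) :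
    D c hc * U t = U (c ^ 2 * t) * D c hc := by
  apply Subtype.ext
  rw [Matrix.SpecialLinearGroup.coe_mul, Matrix.SpecialLinearGroup.coe_mul]
  simp only [Matrix.SpecialLinearGroup.coe_mul, D, U, Matrix.mul_fin_two]
  ext i j
  fin_cases i <;> fin_cases j <;> field_simp <;> ring

lemma W_mul_U (t : ℝ) : W * U (-t) = L t * W := by
  apply Subtype.ext
  rw [Matrix.SpecialLinearGroup.coe_mul, Matrix.SpecialLinearGroup.coe_mul]
  simp only [Matrix.SpecialLinearGroup.coe_mul, W, U, L, Matrix.mul_fin_two]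
  ext i j
  fin_cases i <;> fin_cases j <;> simp

variable {K : Type} [Group K] [TopologicalSpace K] [IsTopologicalGroup K]
  [T2Space K] [CompactSpace K]

lemma phi_U (φ : ContinuousMonoidHom SL2 K) (t : ℝ) : φ (U t) = 1 := by
  set c : ℕ → ℝ := fun n => ((n : ℝ) + 1)⁻¹ with hcdef
  have hc : ∀ n : ℕ, c n ≠ 0 := fun n => by positivity
  set g : ℕ → K := fun n => φ (D (c n) (hc n)) with hgdef
  have key : ∀ n : ℕ, φ (U t) = (g n)⁻¹ * φ (U ((c n) ^ 2 * t)) * g n := by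
    intro n
    have h := D_mul_U (c n) (hc n) t
    have h2 : U t = (D (c n) (hc n))⁻¹ * U ((c n) ^ 2 * t) * D (c n) (hc n) := by
      rw [mul_assoc, ← h, inv_mul_cancel_left]
    rw [h2, _root_.map_mul, _root_.map_mul, map_inv]
  set F : Ultrafilter ℕ := Ultrafilter.of atTop with hFdef
  have hF : (F : Filter ℕ) ≤ atTop := Ultrafilter.of_le _
  obtain ⟨k, -, hk⟩ := isCompact_univ.ultrafilter_le_nhds (F.map g)
    (by simp)
  have hg : Tendsto g F (𝓝 k) := hk
  have hc0 : Tendsto (fun n => (c n) ^ 2 * t) atTop (𝓝 0) := by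
    have h1 : Tendsto c atTop (𝓝 0) := by
      simpa [hcdef, one_div] using tendsto_one_div_add_atTop_nhds_zero_nat (𝕜 := ℝ)
    have h2 : Tendsto (fun n => (c n) ^ 2) atTop (𝓝 0) := by
      simpa using h1.pow 2
    simpa using h2.mul_const t
  have hs : Tendsto (fun n => φ (U ((c n) ^ 2 * t))) F (𝓝 1) := by
    have hUc : Tendsto (fun n => U ((c n) ^ 2 * t)) atTop (𝓝 (U 0)) :=
      (continuous_U.tendsto 0).comp hc0
    have h3 : Tendsto (fun n => φ (U ((c n) ^ 2 * t))) atTop (𝓝 (φ (U 0))) :=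
      ((map_continuous φ).tendsto (U 0)).comp hUc
    rw [U_zero, _root_.map_one] at h3
    exact (h3.mono_left hF)
  have h2 : Tendsto (fun n => (g n)⁻¹ * φ (U ((c n) ^ 2 * t)) * g n) F
      (𝓝 (k⁻¹ * 1 * k)) := (hg.inv.mul hs).mul hg
  have h2' : Tendsto (fun _ : ℕ => φ (U t)) F (𝓝 (k⁻¹ * 1 * k)) :=
    h2.congr fun n => (key n).symm
  have h3 : Tendsto (fun _ : ℕ => φ (U t)) F (𝓝 (φ (U t))) := tendsto_const_nhds
  have := tendsto_nhds_unique h3 h2'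
  simpa using this

lemma phi_L (φ : ContinuousMonoidHom SL2 K) (t : ℝ) : φ (L t) = 1 := by
  have h := W_mul_U t
  have h2 : φ W * φ (U (-t)) = φ (L t) * φ W := by
    rw [← _root_.map_mul, ← _root_.map_mul, h]
  rw [phi_U φ (-t), mul_one] at h2
  have : φ (L t) * φ W = 1 * φ W := by rw [one_mul, ← h2]
  simpa using mul_right_cancel this

lemma phi_of_c_ne (φ : ContinuousMonoidHom SL2 K) (x : SL2)
    (hc0 : (x : Matrix (Fin 2) (Fin 2) ℝ) 1 0 ≠ 0) : φ x = 1 := by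
  obtain ⟨a, b, c, d, h⟩ : ∃ a b c d, (x : Matrix (Fin 2) (Fin 2) ℝ) = !![a, b; c, d] :=
    ⟨_, _, _, _, Matrix.eta_fin_two _⟩
  have hc : c ≠ 0 := by
    rw [h] at hc0
    simpa using hc0
  have hdet : a * d - b * c = 1 := by
    have h2 := x.2
    rw [h, Matrix.det_fin_two_of] at h2
    exact h2
  have hd : x = U ((a - 1) / c) * L c * U ((d - 1) / c) := by
    apply Subtype.ext
    rw [Matrix.SpecialLinearGroup.coe_mul, Matrix.SpecialLinearGroup.coe_mul]
    simp only [Matrix.SpecialLinearGroup.coe_mul, U, L, Matrix.mul_fin_two]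
    rw [h]
    ext i j
    fin_cases i <;> fin_cases j <;> simp <;> field_simp <;> linarith [hdet]
  rw [hd, _root_.map_mul, _root_.map_mul, phi_U, phi_L, phi_U]
  simp

lemma phi_triv (φ : ContinuousMonoidHom SL2 K) (x : SL2) : φ x = 1 := by
  by_cases hc : (x : Matrix (Fin 2) (Fin 2) ℝ) 1 0 ≠ 0
  · exact phi_of_c_ne φ x hc
  · push_neg at hc
    have hdet : (x : Matrix (Fin 2) (Fin 2) ℝ) 0 0 *
        (x : Matrix (Fin 2) (Fin 2) ℝ) 1 1 -
        (x : Matrix (Fin 2) (Fin 2) ℝ) 0 1 *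
        (x : Matrix (Fin 2) (Fin 2) ℝ) 1 0 = 1 := by
      have h := x.2
      rw [Matrix.det_fin_two] at h
      exact h
    have hd : (x : Matrix (Fin 2) (Fin 2) ℝ) 1 1 ≠ 0 := by
      intro h0
      rw [hc, h0] at hdet
      simp at hdet
    have hy : ((x * L 1 : SL2) : Matrix (Fin 2) (Fin 2) ℝ) 1 0 ≠ 0 := by
      rw [Matrix.SpecialLinearGroup.coe_mul]
      simp only [L, Matrix.mul_apply, Fin.sum_univ_two]
      simpa [hc] using hd
    have h1 : φ (x * L 1) = 1 := phi_of_c_ne φ _ hy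
    rw [_root_.map_mul, phi_L, mul_one] at h1
    exact h1

end SL2Triv

section UnitaryInstances

open Matrix

instance unitaryGroup.topologicalGroup (n : ℕ) :
    IsTopologicalGroup (Matrix.unitaryGroup (Fin n) ℂ) where
  continuous_mul := by
    apply continuous_induced_rng.2
    exact (continuous_subtype_val.comp continuous_fst).mul
      (continuous_subtype_val.comp continuous_snd)
  continuous_inv := by
    apply continuous_induced_rng.2
    show Continuous fun a : Matrix.unitaryGroup (Fin n) ℂ =>
      star (a : Matrix (Fin n) (Fin n) ℂ)
    exact continuous_star.comp continuous_subtype_val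

lemma unitaryGroup.entry_norm_le (n : ℕ) (A : Matrix (Fin n) (Fin n) ℂ)
    (hA : A ∈ Matrix.unitaryGroup (Fin n) ℂ) (i j : Fin n) : ‖A i j‖ ≤ 1 := by
  have h : A * star A = 1 := (Unitary.mem_iff.mp hA).2
  have hii : (A * star A) i i = (1 : Matrix (Fin n) (Fin n) ℂ) i i := by rw [h]
  rw [Matrix.mul_apply, Matrix.one_apply_eq] at hii
  have hsum : ∑ k, Complex.normSq (A i k) = 1 := by
    have h2 : ∑ k, (Complex.normSq (A i k) : ℂ) = 1 := by
      rw [← hii]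
      refine Finset.sum_congr rfl fun k _ => ?_
      rw [Matrix.star_apply, ← Complex.mul_conj]
      rfl
    exact_mod_cast h2
  have hle : Complex.normSq (A i j) ≤ 1 := by
    rw [← hsum]
    exact Finset.single_le_sum (fun k _ => Complex.normSq_nonneg _) (Finset.mem_univ j)
  have h1 : ‖A i j‖ ^ 2 ≤ 1 := by
    rw [Complex.sq_norm]
    exact hle
  nlinarith [norm_nonneg (A i j)]

instance unitaryGroup.compactSpace (n : ℕ) :
    CompactSpace (Matrix.unitaryGroup (Fin n) ℂ) := by
  suffices h : IsCompact (Matrix.unitaryGroup (Fin n) ℂ :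
      Set (Matrix (Fin n) (Fin n) ℂ)) from isCompact_iff_compactSpace.mp h
  have hS : IsCompact ((Set.univ.pi fun _ : Fin n =>
      Set.univ.pi fun _ : Fin n => Metric.closedBall (0 : ℂ) 1) :
      Set (Matrix (Fin n) (Fin n) ℂ)) :=
    isCompact_univ_pi fun _ => isCompact_univ_pi fun _ => isCompact_closedBall 0 1
  have hcl : IsClosed (Matrix.unitaryGroup (Fin n) ℂ :
      Set (Matrix (Fin n) (Fin n) ℂ)) := by
    have he : (Matrix.unitaryGroup (Fin n) ℂ : Set (Matrix (Fin n) (Fin n) ℂ)) =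
        {A | star A * A = 1} ∩ {A | A * star A = 1} := by
      ext A
      simpa [Set.mem_inter_iff] using Unitary.mem_iff
    rw [he]
    exact (isClosed_eq (continuous_star.mul continuous_id) continuous_const).inter
      (isClosed_eq (continuous_id.mul continuous_star) continuous_const)
  refine hS.of_isClosed_subset hcl ?_
  intro A hA
  rw [Set.mem_univ_pi]
  intro i
  rw [Set.mem_univ_pi]
  intro j
  rw [Metric.mem_closedBall, dist_zero_right]
  exact unitaryGroup.entry_norm_le n A hA i j

end UnitaryInstances

/-- Every continuous finite-dimensional unitary representation of `SL(2, ℝ)` is trivial;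
consequently every continuous homomorphism from `SL(2, ℝ)` into a compact Hausdorff
topological group is trivial, i.e. the Bohr compactification of `SL(2, ℝ)` is trivial. -/
theorem sl2R_unitary_reps_and_compact_homs_trivial :
    (∀ (n : ℕ)
      (ρ : ContinuousMonoidHom (Matrix.SpecialLinearGroup (Fin 2) ℝ)
        (Matrix.unitaryGroup (Fin n) ℂ)),
      ∀ x : Matrix.SpecialLinearGroup (Fin 2) ℝ, ρ x = 1) ∧
    (∀ (K : Type) [Group K] [TopologicalSpace K] [IsTopologicalGroup K]
      [T2Space K] [CompactSpace K]
      (φ : ContinuousMonoidHom (Matrix.SpecialLinearGroup (Fin 2) ℝ) K),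
      ∀ x : Matrix.SpecialLinearGroup (Fin 2) ℝ, φ x = 1) := by
  constructor
  · intro n ρ x
    exact SL2Triv.phi_triv ρ x
  · intro K _ _ _ _ _ φ x
    exact SL2Triv.phi_triv φ x
end

section
/- Let G be a group with two locally compact Hausdorff group topologies τ₁ ⊆ τ₂ (identity maps G_{τ₂} → G_{τ₁} continuous), and suppose there is a third locally compact group topology τ₀ ⊆ τ₁ such that the canonical continuous homomorphism from the completion/quotient group G_{τ₂} onto G_{τ₀} is open surjective with compact kernel. Then the canonical map G_{τ₂} → G_{τ₁} is also open surjective with compact kernel (i.e., G_{τ₁} is a quotient of G_{τ₂} by a compact subgroup). -/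
open Set Pointwise


/-- Lemma (ii): if `τ₀ ⊆ τ₁ ⊆ τ₂` are locally precompact group topologies and `τ₀` is a
quotient of `τ₂`, then `τ₁` is a quotient of `τ₂`.  Formulated via the locally compact
completions: `G₂ = G_{τ₂}`, `G₁ = G_{τ₁}`, `G₀ = G_{τ₀}`, with the canonical continuous
dense-range homomorphisms `g = η^{τ₂}_{τ₁} : G₂ → G₁` and `h = η^{τ₁}_{τ₀} : G₁ → G₀`.  If
the composite `h ∘ g = η^{τ₂}_{τ₀}` is surjective and open with compact kernel, then so is
`g`. -/
theorem intermediate_quotient_of_quotient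
    {G₀ G₁ G₂ : Type*} [Group G₀] [Group G₁] [Group G₂]
    [TopologicalSpace G₀] [TopologicalSpace G₁] [TopologicalSpace G₂]
    [IsTopologicalGroup G₀] [IsTopologicalGroup G₁] [IsTopologicalGroup G₂]
    [T2Space G₀] [T2Space G₁] [T2Space G₂]
    [LocallyCompactSpace G₀] [LocallyCompactSpace G₁] [LocallyCompactSpace G₂]
    (g : G₂ →* G₁) (h : G₁ →* G₀)
    (hgc : Continuous g) (hhc : Continuous h)
    (hgd : DenseRange g) (hhd : DenseRange h)
    (hsurj : Function.Surjective (h.comp g))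
    (hopen : IsOpenMap (h.comp g))
    (hker : IsCompact ((h.comp g).ker : Set G₂)) :
    Function.Surjective g ∧ IsOpenMap g ∧ IsCompact (g.ker : Set G₂) := by
  set φ := h.comp g with hφ
  have hφc : Continuous φ := hhc.comp hgc
  -- step 1: φ is proper
  have hφproper : IsProperMap (φ : G₂ → G₀) := by
    rw [isProperMap_iff_isCompact_preimage]
    refine ⟨hφc, fun {K} hK => ?_⟩
    obtain ⟨V, hVc, hVn⟩ := exists_compact_mem_nhds (1 : G₂)
    have hcover : K ⊆ ⋃ x : G₂, φ '' ((x * ·) '' interior V) := by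
      intro k hk
      obtain ⟨x, hx⟩ := hsurj k
      exact mem_iUnion.2 ⟨x, ⟨x * 1, ⟨1, mem_interior_iff_mem_nhds.2 hVn, rfl⟩, by simp [hx]⟩⟩
    obtain ⟨t, ht⟩ := hK.elim_finite_subcover _
      (fun x => hopen _ ((isOpenMap_mul_left x) _ isOpen_interior)) hcover
    have hsub : φ ⁻¹' K ⊆ (⋃ x ∈ t, (x * ·) '' V) * (φ.ker : Set G₂) := by
      intro y hy
      have := ht hy
      rw [mem_iUnion₂] at this
      obtain ⟨x, hxt, hx⟩ := this
      obtain ⟨z, ⟨v, hv, rfl⟩, hz⟩ := hx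
      have h1 : x * v ∈ ⋃ x ∈ t, (x * ·) '' V :=
        mem_biUnion hxt ⟨v, interior_subset hv, rfl⟩
      have h2 : (x * v)⁻¹ * y ∈ (φ.ker : Set G₂) := by
        have : φ ((x * v)⁻¹ * y) = 1 := by
          simp only [map_mul, map_inv, hz]
          group
        simpa [SetLike.mem_coe, MonoidHom.mem_ker] using this
      have hy' : y = (x * v) * ((x * v)⁻¹ * y) := by group
      rw [hy']
      exact Set.mul_mem_mul h1 h2
    have hbig : IsCompact ((⋃ x ∈ t, (x * ·) '' V) * (φ.ker : Set G₂)) :=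
      (t.isCompact_biUnion fun x _ => hVc.image (continuous_mul_left x)).mul hker
    exact hbig.of_isClosed_subset (hK.isClosed.preimage hφc) hsub
  -- step 2: g is proper
  have hgproper : IsProperMap (g : G₂ → G₁) :=
    isProperMap_of_comp_of_t2 hgc hhc hφproper
  have hgclosed : IsClosedMap (g : G₂ → G₁) := hgproper.isClosedMap
  have hrange : Set.range g = univ := by
    have h1 : IsClosed (Set.range g) := hgclosed.isClosed_range
    have := hgd.closure_range
    rwa [h1.closure_eq] at this
  have hgsurj : Function.Surjective g := Set.range_eq_univ.mp hrange
  have hkerg : IsCompact (g.ker : Set G₂) := by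
    refine hker.of_isClosed_subset (isClosed_singleton.preimage hgc) ?_
    intro x hx
    simp only [SetLike.mem_coe, MonoidHom.mem_ker] at hx ⊢
    simp [hφ, MonoidHom.comp_apply, hx]
  have hgopen : IsOpenMap (g : G₂ → G₁) := by
    set N := g.ker with hN
    let gbar : G₂ ⧸ N →* G₁ := QuotientGroup.kerLift g
    have hbij : Function.Bijective gbar := ⟨QuotientGroup.kerLift_injective g,
      fun y => by obtain ⟨x, rfl⟩ := hgsurj y; exact ⟨QuotientGroup.mk x, rfl⟩⟩
    have hbarclosed : IsClosedMap (gbar : G₂ ⧸ N → G₁) := by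
      intro C hC
      have himg : gbar '' C = g '' (QuotientGroup.mk ⁻¹' C) := by
        ext y
        constructor
        · rintro ⟨c, hc, rfl⟩
          obtain ⟨x, rfl⟩ := QuotientGroup.mk_surjective c
          exact ⟨x, hc, rfl⟩
        · rintro ⟨x, hx, rfl⟩
          exact ⟨QuotientGroup.mk x, hx, rfl⟩
      rw [himg]
      exact hgclosed _ (hC.preimage continuous_quotient_mk')
    have hbaropen : IsOpenMap (gbar : G₂ ⧸ N → G₁) := by
      intro U hU
      have : gbar '' U = (gbar '' Uᶜ)ᶜ := by
        rw [← Set.image_compl_eq hbij, compl_compl]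
      rw [this]
      exact (hbarclosed _ hU.isClosed_compl).isOpen_compl
    have hg_eq : (g : G₂ → G₁) = gbar ∘ QuotientGroup.mk := rfl
    rw [hg_eq]
    exact hbaropen.comp QuotientGroup.isOpenMap_coe
  exact ⟨hgsurj, hgopen, hkerg⟩
end
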